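/- For every nonzero λ ∈ ℂ, every α ∈ ℂ and all integers m, n, the operators of Φ(λ,α) on ℂ[s,t,v] satisfy the commutator identity Y_n ∘ Y_m − Y_m ∘ Y_n = (m − n) · M_{m+n} as ℂ-linear endomorphisms of ℂ[s,t,v]. -/
import Mathlib


open MvPolynomial

/-- Substitution `s ↦ s - m` (the variable `s` is `X 0`) on `ℂ[s,t,v]`. -/
noncomputable def substS (m : ℤ) : Module.End ℂ (MvPolynomial (Fin 3) ℂ) :=
  (aeval (fun i : Fin 3 =>
    if i = 0 then (X 0 : MvPolynomial (Fin 3) ℂ) - C (m : ℂ) else X i)).toLinearMap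

/-- Partial differentiation with respect to `v` (the variable `X 2`). -/
noncomputable def Dv : Module.End ℂ (MvPolynomial (Fin 3) ℂ) :=
  (pderiv (2 : Fin 3)).toLinearMap

/-- Multiplication by a fixed polynomial, as a linear endomorphism. -/
noncomputable def mulOp (p : MvPolynomial (Fin 3) ℂ) : Module.End ℂ (MvPolynomial (Fin 3) ℂ) :=
  LinearMap.mulLeft ℂ p

/-- The operator `L_m` of `Φ(λ,α)`:
`L_m·f = λ^m((s+mα)f(s−m,t,v) − (m/2)v ∂_v f(s−m,t,v) + (m²/4)t ∂_v² f(s−m,t,v))`. -/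
noncomputable def Lop (lam α : ℂ) (m : ℤ) : Module.End ℂ (MvPolynomial (Fin 3) ℂ) :=
  lam ^ m • (mulOp (X 0 + C ((m : ℂ) * α)) * substS m
    - ((m : ℂ) / 2) • (mulOp (X 2) * (Dv * substS m))
    + ((m : ℂ) ^ 2 / 4) • (mulOp (X 1) * (Dv * (Dv * substS m))))

/-- The operator `M_m` of `Φ(λ,α)`: `M_m·f = λ^m t f(s−m,t,v)`. -/
noncomputable def Mop (lam : ℂ) (m : ℤ) : Module.End ℂ (MvPolynomial (Fin 3) ℂ) :=
  lam ^ m • (mulOp (X 1) * substS m)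

/-- The operator `Y_m` of `Φ(λ,α)`: `Y_m·f = λ^m(v f(s−m,t,v) − m t ∂_v f(s−m,t,v))`. -/
noncomputable def Yop (lam : ℂ) (m : ℤ) : Module.End ℂ (MvPolynomial (Fin 3) ℂ) :=
  lam ^ m • (mulOp (X 2) * substS m - (m : ℂ) • (mulOp (X 1) * (Dv * substS m)))



set_option linter.unnecessarySeqFocus false
set_option linter.unusedTactic false
set_option linter.unusedVariables false

lemma hST (k : ℤ) : substS k * mulOp (X 1) = mulOp (X 1) * substS k := by
  apply LinearMap.ext; intro f
  simp [substS, mulOp, Module.End.mul_apply]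

lemma hSV (k : ℤ) : substS k * mulOp (X 2) = mulOp (X 2) * substS k := by
  apply LinearMap.ext; intro f
  simp [substS, mulOp, Module.End.mul_apply]

lemma hSD (k : ℤ) : substS k * Dv = Dv * substS k := by
  apply LinearMap.ext; intro f
  show (aeval _) ((pderiv 2) f) = (pderiv 2) ((aeval _) f)
  induction f using MvPolynomial.induction_on with
  | C a => simp
  | add p q hp hq => simp only [map_add, hp, hq]
  | mul_X p i hp =>
    rw [pderiv_mul, map_add, map_mul, map_mul, map_mul, pderiv_mul, hp]
    congr 1
    fin_cases i <;> simp

lemma hSS (k l : ℤ) : substS k * substS l = substS (k + l) := by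
  have h : ((aeval (fun i : Fin 3 =>
      if i = 0 then (X 0 : MvPolynomial (Fin 3) ℂ) - C (k : ℂ) else X i)).comp
      (aeval (fun i : Fin 3 =>
      if i = 0 then (X 0 : MvPolynomial (Fin 3) ℂ) - C (l : ℂ) else X i))) =
      aeval (fun i : Fin 3 =>
      if i = 0 then (X 0 : MvPolynomial (Fin 3) ℂ) - C ((k + l : ℤ) : ℂ) else X i) := by
    apply MvPolynomial.algHom_ext
    intro i
    fin_cases i <;> simp <;> push_cast <;> ring
  apply LinearMap.ext; intro f
  have := DFunLike.congr_fun h f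
  simpa [substS, Module.End.mul_apply] using this

lemma hDV : Dv * mulOp (X 2) = mulOp (X 2) * Dv + 1 := by
  apply LinearMap.ext; intro f
  show (pderiv 2) ((X 2 : MvPolynomial (Fin 3) ℂ) * f) = X 2 * (pderiv 2) f + f
  rw [pderiv_mul]
  simp [add_comm]

lemma hDT : Dv * mulOp (X 1) = mulOp (X 1) * Dv := by
  apply LinearMap.ext; intro f
  show (pderiv 2) ((X 1 : MvPolynomial (Fin 3) ℂ) * f) = X 1 * (pderiv 2) f
  rw [pderiv_mul]
  simp [pderiv_X_of_ne (show (2 : Fin 3) ≠ 1 by decide)]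

lemma hVT : mulOp (X 2) * mulOp (X 1) = mulOp (X 1) * mulOp (X 2) := by
  apply LinearMap.ext; intro f
  simp only [Module.End.mul_apply, mulOp, LinearMap.mulLeft_apply]
  ring

lemma comm_app {R : Type*} [Ring R] {a b : R} (h : a * b = b * a) (x : R) :
    a * (b * x) = b * (a * x) := by rw [← mul_assoc, h, mul_assoc]

lemma hSTa (k : ℤ) (x) : substS k * (mulOp (X 1) * x) = mulOp (X 1) * (substS k * x) :=
  comm_app (hST k) x
lemma hSVa (k : ℤ) (x) : substS k * (mulOp (X 2) * x) = mulOp (X 2) * (substS k * x) :=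
  comm_app (hSV k) x
lemma hSDa (k : ℤ) (x) : substS k * (Dv * x) = Dv * (substS k * x) :=
  comm_app (hSD k) x
lemma hDTa (x) : Dv * (mulOp (X 1) * x) = mulOp (X 1) * (Dv * x) :=
  comm_app hDT x
lemma hVTa (x) : mulOp (X 2) * (mulOp (X 1) * x) = mulOp (X 1) * (mulOp (X 2) * x) :=
  comm_app hVT x
lemma hSSa (k l : ℤ) (x) : substS k * (substS l * x) = substS (k + l) * x := by
  rw [← mul_assoc, hSS]
lemma hDVa (x) : Dv * (mulOp (X 2) * x) = mulOp (X 2) * (Dv * x) + x := by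
  rw [← mul_assoc, hDV, add_mul, one_mul, mul_assoc]

/-- `Y_n ∘ Y_m − Y_m ∘ Y_n = (m − n) M_{m+n}` on `Φ(λ,α)`. -/
theorem stmt3 (lam : ℂ) (hlam : lam ≠ 0) (α : ℂ) (m n : ℤ) :
    Yop lam n * Yop lam m - Yop lam m * Yop lam n
      = ((m : ℂ) - (n : ℂ)) • Mop lam (m + n) := by
  have hc : substS (n + m) = substS (m + n) := by rw [add_comm]
  unfold Yop Mop
  rw [zpow_add₀ hlam]
  simp only [smul_mul_assoc, mul_smul_comm, smul_smul, mul_sub, sub_mul, mul_assoc,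
    hSVa, hSTa, hSDa, hSSa, hDVa, hDTa, hVTa, hST, hSV, hSD, hSS, hc,
    smul_sub, sub_smul, smul_add, add_mul, mul_add, mul_one]
  module
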